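/- arXiv:math/0610226 — 5 statements merged into one kernel-verified Lean document; each statement's English description precedes it below -/
import Mathlib

section
/- Let G be a (not necessarily Hausdorff) topological group with topology γ, and H a (not necessarily closed) subgroup. Suppose γ₁ ⊆ γ is a coarser group topology on G such that γ₁ and γ induce the same subspace topology on H, and the quotient topologies γ₁/H and γ/H on the left coset space G/H coincide. Then γ₁ = γ. -/
/-!
It suffices to compare neighbourhoods of `1`. Given a `γ`-neighbourhood `U` of `1`, pick a
`γ`-open `V ∋ 1` with `V * V ⊆ U`. Since the two topologies agree on `H`, some `γ₁`-open `W`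
satisfies `W ∩ H = V ∩ H`; take a `γ₁`-open `W₁ ∋ 1` with `W₁⁻¹ * W₁ ⊆ W`. The set
`(V ∩ W₁) * H` is `γ`-open and a union of cosets, hence `γ₁`-open because the quotient
topologies agree. Intersected with `W₁` it is a `γ₁`-neighbourhood of `1`, and it lies in
`V * V ⊆ U`: if `x = a * h ∈ W₁` with `a ∈ V ∩ W₁`, `h ∈ H`, then `h = a⁻¹ * x ∈ W ∩ H ⊆ V`.
-/

open Set Pointwise Topology

theorem TopologicalSpace.exists_isOpen_inter_eq_of_induced_eq {X : Type*}
    {t t₁ : TopologicalSpace X} {s : Set X}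
    (h : t₁.induced ((↑) : s → X) = t.induced ((↑) : s → X)) {V : Set X} (hV : IsOpen[t] V) :
    ∃ W, IsOpen[t₁] W ∧ s ∩ W = s ∩ V := by
  have hVs : IsOpen[t₁.induced ((↑) : s → X)] (((↑) : s → X) ⁻¹' V) := h ▸ ⟨V, hV, rfl⟩
  obtain ⟨W, hW, hWV⟩ := hVs
  exact ⟨W, hW, Subtype.preimage_coe_eq_preimage_coe_iff.mp hWV⟩

theorem IsOpen.mul_subgroup_of_coinduced_eq {G : Type*} [Group G] {t₁ : TopologicalSpace G}
    [t : TopologicalSpace G] [ContinuousConstSMul Gᵐᵒᵖ G] {H : Subgroup G}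
    (h : t₁.coinduced (QuotientGroup.mk : G → G ⧸ H) = t.coinduced QuotientGroup.mk)
    {s : Set G} (hs : IsOpen s) : IsOpen[t₁] (s * H) := by
  have hsH : IsOpen[t.coinduced QuotientGroup.mk] ((QuotientGroup.mk : G → G ⧸ H) '' s) := by
    rw [isOpen_coinduced, QuotientGroup.preimage_image_mk_eq_mul]
    exact hs.mul_right
  rw [← h, isOpen_coinduced, QuotientGroup.preimage_image_mk_eq_mul] at hsH
  exact hsH

theorem exists_isOpen_one_mem_inv_mul_subset {G : Type*} [Group G] [TopologicalSpace G]
    [IsTopologicalGroup G] {U : Set G} (hU : U ∈ 𝓝 (1 : G)) :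
    ∃ V : Set G, IsOpen V ∧ (1 : G) ∈ V ∧ V⁻¹ * V ⊆ U := by
  obtain ⟨V, hVo, hV1, hVU⟩ := exists_open_nhds_one_mul_subset hU
  refine ⟨V ∩ V⁻¹, hVo.inter hVo.inv, ⟨hV1, by simpa using hV1⟩, ?_⟩
  have hinv : (V ∩ V⁻¹)⁻¹ ⊆ V := by
    rw [inter_inv, inv_inv]
    exact inter_subset_right
  exact (mul_subset_mul hinv inter_subset_left).trans hVU

theorem Subgroup.inter_mul_inter_subset_mul_self {G : Type*} [Group G] {H : Subgroup G}
    {V W W₁ : Set G} (hW₁ : W₁⁻¹ * W₁ ⊆ W) (hWV : (H : Set G) ∩ W ⊆ V) :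
    (V ∩ W₁) * H ∩ W₁ ⊆ V * V := by
  rintro _ ⟨⟨a, ⟨haV, haW₁⟩, h, hh, rfl⟩, hx⟩
  have hW : h ∈ W := hW₁ ⟨a⁻¹, inv_mem_inv.mpr haW₁, a * h, hx, inv_mul_cancel_left a h⟩
  exact ⟨a, haV, h, hWV ⟨hh, hW⟩, rfl⟩

/-- Merson's Lemma: if `γ₁ ⊆ γ` are group topologies on a group `G` (not necessarily
Hausdorff), `H` is a subgroup on which the two subspace topologies coincide, and the two
quotient topologies on the coset space `G ⧸ H` coincide, then `γ₁ = γ`. -/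
theorem merson_lemma {G : Type*} [Group G] (γ γ₁ : TopologicalSpace G)
    (hγ : @IsTopologicalGroup G γ _) (hγ₁ : @IsTopologicalGroup G γ₁ _)
    (H : Subgroup G)
    (hcoarser : γ ≤ γ₁)
    (hsub : γ₁.induced ((↑) : H → G) = γ.induced ((↑) : H → G))
    (hquot : γ₁.coinduced (QuotientGroup.mk : G → G ⧸ H) =
      γ.coinduced (QuotientGroup.mk : G → G ⧸ H)) :
    γ₁ = γ := by
  refine IsTopologicalGroup.ext hγ₁ hγ (le_antisymm (fun U hU => ?_) (nhds_mono hcoarser))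
  obtain ⟨V, hVo, hV1, hVU⟩ := @exists_open_nhds_one_mul_subset G γ _ _ U hU
  obtain ⟨W, hWo, hWV⟩ := TopologicalSpace.exists_isOpen_inter_eq_of_induced_eq hsub hVo
  have hW1 : (1 : G) ∈ W := (hWV ▸ ⟨H.one_mem, hV1⟩ : (1 : G) ∈ (H : Set G) ∩ W).2
  obtain ⟨W₁, hW₁o, hW₁1, hW₁W⟩ := exists_isOpen_one_mem_inv_mul_subset (hWo.mem_nhds hW1)
  have hVW₁ : IsOpen[γ] (V ∩ W₁) := @IsOpen.inter G γ _ _ hVo (hW₁o.mono hcoarser)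
  have hS : IsOpen[γ₁] ((V ∩ W₁) * H) := IsOpen.mul_subgroup_of_coinduced_eq (t := γ) hquot hVW₁
  have hS1 : (1 : G) ∈ (V ∩ W₁) * H ∩ W₁ := ⟨⟨1, ⟨hV1, hW₁1⟩, 1, H.one_mem, mul_one 1⟩, hW₁1⟩
  refine Filter.mem_of_superset ((hS.inter hW₁o).mem_nhds hS1) ?_
  exact (Subgroup.inter_mul_inter_subset_mul_self hW₁W (hWV ▸ inter_subset_right)).trans hVU
end

section
/- Let P = X ⋊_α G be a topological semidirect product with topology γ, and suppose X is G-minimal with respect to α (i.e., there is no strictly coarser Hausdorff group topology τ' on X such that α : G × (X,τ') → (X,τ') remains continuous). Then for every coarser Hausdorff group topology γ₁ ⊆ γ on P, the restrictions satisfy γ₁|_X = γ|_X. -/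
/-- The product topology on the semidirect product `X ⋊[φ] G`. -/
def sdpTopology {X G : Type*} [Group X] [Group G] [TopologicalSpace X] [TopologicalSpace G]
    (φ : G →* MulAut X) : TopologicalSpace (X ⋊[φ] G) :=
  TopologicalSpace.induced (fun p : X ⋊[φ] G => (p.left, p.right)) inferInstance

/-!
A coarser Hausdorff group topology `γ₁` on `P = X ⋊ G` restricts to a Hausdorff group topology
on `X` that is coarser than the original one, because the product topology restricts to it. The
action stays continuous for this restriction: `φ g x = inr g * inl x * (inr g)⁻¹` is computed in
the topological group `(P, γ₁)`, into which `inr` is continuous. `G`-minimality then forces the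
restriction to be the original topology.
-/

open SemidirectProduct

section

variable {X G : Type*} [Group X] [Group G]

theorem induced_inl_sdpTopology [tX : TopologicalSpace X] [TopologicalSpace G]
    (φ : G →* MulAut X) : (sdpTopology φ).induced (inl : X →* X ⋊[φ] G) = tX := by
  rw [sdpTopology, induced_compose]
  change TopologicalSpace.induced (fun x : X => ((x, 1) : X × G)) _ = tX
  rw [instTopologicalSpaceProd, induced_inf, induced_compose, induced_compose]
  exact (congrArg₂ (· ⊓ ·) induced_id induced_const).trans (inf_top_eq tX)

theorem continuous_inr_of_sdpTopology_le [TopologicalSpace X] [tG : TopologicalSpace G]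
    {φ : G →* MulAut X} {γ : TopologicalSpace (X ⋊[φ] G)} (h : sdpTopology φ ≤ γ) :
    @Continuous G (X ⋊[φ] G) tG γ inr :=
  continuous_le_rng h <| continuous_induced_rng.2 (continuous_const.prodMk continuous_id)

theorem continuous_action_induced_inl [tG : TopologicalSpace G] {φ : G →* MulAut X}
    [γ : TopologicalSpace (X ⋊[φ] G)] [IsTopologicalGroup (X ⋊[φ] G)]
    (hinr : Continuous (inr : G → X ⋊[φ] G)) :
    @Continuous (G × X) X (@instTopologicalSpaceProd G X tG (γ.induced inl)) (γ.induced inl)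
      fun p => φ p.1 p.2 := by
  let _ : TopologicalSpace X := γ.induced inl
  have hinl : Continuous (inl : X → X ⋊[φ] G) := continuous_induced_dom
  have hconj : Continuous fun p : G × X =>
      (inr p.1 * inl p.2 * (inr p.1)⁻¹ : X ⋊[φ] G) := by fun_prop
  refine continuous_induced_rng.2 (hconj.congr fun p => ?_)
  rw [← map_inv, ← inl_aut]
  rfl

end

theorem restriction_eq_of_G_minimal_general {X G : Type*} [Group X] [Group G]
    [tX : TopologicalSpace X] [tG : TopologicalSpace G]
    (φ : G →* MulAut X)
    (hGmin : ∀ tX' : TopologicalSpace X, @IsTopologicalGroup X tX' _ → @T2Space X tX' →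
      tX ≤ tX' →
      (@Continuous (G × X) X (@instTopologicalSpaceProd G X tG tX') tX'
        fun p => φ p.1 p.2) → tX' = tX)
    (γ₁ : TopologicalSpace (X ⋊[φ] G))
    (hγ₁grp : @IsTopologicalGroup (X ⋊[φ] G) γ₁ _)
    (hγ₁T2 : @T2Space (X ⋊[φ] G) γ₁)
    (hcoarser : sdpTopology φ ≤ γ₁) :
    γ₁.induced ⇑(SemidirectProduct.inl : X →* X ⋊[φ] G) =
      (sdpTopology φ).induced ⇑(SemidirectProduct.inl : X →* X ⋊[φ] G) := by
  rw [induced_inl_sdpTopology]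
  let _ := γ₁
  exact hGmin _ (topologicalGroup_induced inl)
    (@T2Space.of_injective_continuous _ _ (γ₁.induced inl) _ _ _ inl_injective
      continuous_induced_dom)
    ((induced_inl_sdpTopology φ).symm.trans_le (induced_mono hcoarser))
    (continuous_action_induced_inl (continuous_inr_of_sdpTopology_le hcoarser))

/-- If `X` is `G`-minimal with respect to a continuous action `φ` by automorphisms, then
every coarser Hausdorff group topology `γ₁` on the topological semidirect product
`P = X ⋊ G` induces on `X` (embedded via `inl`) the same topology as the product
topology `γ`. -/
theorem restriction_eq_of_G_minimal {X G : Type*} [Group X] [Group G]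
    [tX : TopologicalSpace X] [tG : TopologicalSpace G]
    [IsTopologicalGroup X] [IsTopologicalGroup G]
    (φ : G →* MulAut X)
    (hact : Continuous fun p : G × X => φ p.1 p.2)
    (hGmin : ∀ tX' : TopologicalSpace X, @IsTopologicalGroup X tX' _ → @T2Space X tX' →
      tX ≤ tX' →
      (@Continuous (G × X) X (@instTopologicalSpaceProd G X tG tX') tX'
        fun p => φ p.1 p.2) → tX' = tX)
    (γ₁ : TopologicalSpace (X ⋊[φ] G))
    (hγ₁grp : @IsTopologicalGroup (X ⋊[φ] G) γ₁ _)
    (hγ₁T2 : @T2Space (X ⋊[φ] G) γ₁)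
    (hcoarser : sdpTopology φ ≤ γ₁) :
    γ₁.induced ⇑(SemidirectProduct.inl : X →* X ⋊[φ] G) =
      (sdpTopology φ).induced ⇑(SemidirectProduct.inl : X →* X ⋊[φ] G) :=
  restriction_eq_of_G_minimal_general (tX := tX) (tG := tG) φ hGmin γ₁ hγ₁grp hγ₁T2 hcoarser
end

section
/- Let ω : V × W → ℝ be a continuous bilinear map between normed spaces, and let h₁ : G → Iso(V) be a co-representation and h₂ : G → Iso(W) a representation of a topological group G by linear isometries, forming a co-birepresentation: ω(vg, ψ) = ω(v, gψ) for all g, v, ψ. If v ∈ V and ψ ∈ W are G-continuous vectors (their orbit maps G → V, G → W are norm continuous), then the matrix coefficient m_{v,ψ} : G → ℝ, g ↦ ω(vg, ψ), is bounded and both left and right uniformly continuous on G. -/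
/-!
Continuity of `ω` at the origin makes it bounded, `|ω x y| ≤ C ‖x‖ ‖y‖`. The equivariance
`ω(vg, ψ) = ω(v, gψ)` moves the perturbation onto one factor:
`m(ug) - m(g) = ω(vu - v, gψ)` and `m(gu) - m(g) = ω(vg, uψ - ψ)`. Since `G` acts by isometries,
the other factor has constant norm, so both differences are bounded uniformly in `g` by
`C ‖vu - v‖ ‖ψ‖` and `C ‖v‖ ‖uψ - ψ‖`, which tend to `0` as `u → 1` by continuity of the orbits.
-/

open Filter Topology

theorem LinearMap.exists_bound_of_continuous₂ {𝕜 V W : Type*} [RCLike 𝕜]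
    [NormedAddCommGroup V] [NormedSpace 𝕜 V] [NormedAddCommGroup W] [NormedSpace 𝕜 W]
    (ω : V →ₗ[𝕜] W →ₗ[𝕜] 𝕜) (hω : Continuous fun p : V × W => ω p.1 p.2) :
    ∃ C : ℝ, ∀ x y, ‖ω x y‖ ≤ C * ‖x‖ * ‖y‖ := by
  obtain ⟨ε, hε, hball⟩ : ∃ ε > 0, ∀ p : V × W, dist p 0 < ε → dist (ω p.1 p.2) 0 < 1 := by
    simpa using Metric.continuous_iff.mp hω 0 1 one_pos
  obtain ⟨r, hr, hrε⟩ : ∃ r, 0 < r ∧ r < ε := ⟨ε / 2, half_pos hε, half_lt_self hε⟩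
  have hsmall : ∀ x y, ‖x‖ ≤ r → ‖y‖ ≤ r → ‖ω x y‖ ≤ 1 := fun x y hx hy => by
    have hxy : dist (x, y) 0 < ε := by
      rw [Prod.dist_eq]
      simpa using max_lt (by linarith : ‖x‖ < ε) (by linarith : ‖y‖ < ε)
    simpa using (hball (x, y) hxy).le
  have hleft : ∀ x y, ‖x‖ ≤ r → ‖ω x y‖ ≤ 1 / r * ‖y‖ := fun x y hx =>
    (ω x).bound_of_ball_bound' hr 1
      (fun z hz => hsmall x z hx (by simpa using hz)) y
  refine ⟨1 / r / r, fun x y => ?_⟩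
  calc ‖ω x y‖ = ‖ω.flip y x‖ := rfl
    _ ≤ 1 / r * ‖y‖ / r * ‖x‖ :=
      (ω.flip y).bound_of_ball_bound' hr _ (fun z hz => hleft z y (by simpa using hz)) x
    _ = 1 / r / r * ‖x‖ * ‖y‖ := by ring

theorem eventually_forall_abs_lt_of_abs_le {X ι : Type*} {l : Filter X} {φ : X → ℝ}
    (hφ : Tendsto φ l (𝓝 0)) {D : X → ι → ℝ} (hD : ∀ x i, |D x i| ≤ φ x) {ε : ℝ}
    (hε : 0 < ε) : ∀ᶠ x in l, ∀ i, |D x i| < ε :=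
  (hφ.eventually (gt_mem_nhds hε)).mono fun x hx i => (hD x i).trans_lt hx

theorem matrix_coefficient_uniformly_continuous_general {G V W : Type*}
    [Group G] [TopologicalSpace G]
    [NormedAddCommGroup V] [NormedSpace ℝ V]
    [NormedAddCommGroup W] [NormedSpace ℝ W]
    (ω : V →ₗ[ℝ] W →ₗ[ℝ] ℝ)
    (hω : Continuous fun p : V × W => ω p.1 p.2)
    (h₁ : G → V ≃ₗᵢ[ℝ] V) (h₂ : G → W ≃ₗᵢ[ℝ] W)
    (h₁anti : ∀ (g₁ g₂ : G) (x : V), h₁ (g₁ * g₂) x = h₁ g₂ (h₁ g₁ x))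
    (h₁one : ∀ x : V, h₁ 1 x = x)
    (h₂one : ∀ y : W, h₂ 1 y = y)
    (hinv : ∀ (g : G) (x : V) (y : W), ω (h₁ g x) y = ω x (h₂ g y))
    (v : V) (ψ : W)
    (hv : Continuous fun g : G => h₁ g v)
    (hψ : Continuous fun g : G => h₂ g ψ) :
    (∃ C : ℝ, ∀ g : G, |ω (h₁ g v) ψ| ≤ C) ∧
    (∀ ε > (0 : ℝ), ∃ U ∈ nhds (1 : G), ∀ u ∈ U, ∀ g : G,
        |ω (h₁ (u * g) v) ψ - ω (h₁ g v) ψ| < ε) ∧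
    (∀ ε > (0 : ℝ), ∃ U ∈ nhds (1 : G), ∀ u ∈ U, ∀ g : G,
        |ω (h₁ (g * u) v) ψ - ω (h₁ g v) ψ| < ε) := by
  obtain ⟨C, hC⟩ := ω.exists_bound_of_continuous₂ hω
  refine ⟨⟨C * ‖v‖ * ‖ψ‖, fun g => by simpa using hC (h₁ g v) ψ⟩, fun ε hε => ?_, fun ε hε => ?_⟩
  · have hφ : Tendsto (fun u => C * ‖h₁ u v - v‖ * ‖ψ‖) (𝓝 1) (𝓝 0) := by
      simpa [h₁one] using (((hv.sub (continuous_const (y := v))).norm.const_mul C).mul_const ‖ψ‖).tendsto 1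
    refine (eventually_forall_abs_lt_of_abs_le hφ (fun u g => ?_) hε).exists_mem
    calc |ω (h₁ (u * g) v) ψ - ω (h₁ g v) ψ| = ‖ω (h₁ u v - v) (h₂ g ψ)‖ := by
          simp only [h₁anti, hinv, map_sub, LinearMap.sub_apply, Real.norm_eq_abs]
      _ ≤ C * ‖h₁ u v - v‖ * ‖ψ‖ := by simpa using hC (h₁ u v - v) (h₂ g ψ)
  · have hφ : Tendsto (fun u => C * ‖v‖ * ‖h₂ u ψ - ψ‖) (𝓝 1) (𝓝 0) := by
      simpa [h₂one] using ((hψ.sub (continuous_const (y := ψ))).norm.const_mul (C * ‖v‖)).tendsto 1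
    refine (eventually_forall_abs_lt_of_abs_le hφ (fun u g => ?_) hε).exists_mem
    calc |ω (h₁ (g * u) v) ψ - ω (h₁ g v) ψ| = ‖ω (h₁ g v) (h₂ u ψ - ψ)‖ := by
          simp only [h₁anti, hinv, map_sub, Real.norm_eq_abs]
      _ ≤ C * ‖v‖ * ‖h₂ u ψ - ψ‖ := by simpa using hC (h₁ g v) (h₂ u ψ - ψ)

/-- Bicontinuous matrix coefficients of a co-birepresentation of `G` in a continuous
bilinear map `ω : V × W → ℝ` are bounded and both left and right uniformly
continuous on `G`. -/
theorem matrix_coefficient_uniformly_continuous {G V W : Type*}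
    [Group G] [TopologicalSpace G] [IsTopologicalGroup G]
    [NormedAddCommGroup V] [NormedSpace ℝ V]
    [NormedAddCommGroup W] [NormedSpace ℝ W]
    (ω : V →ₗ[ℝ] W →ₗ[ℝ] ℝ)
    (hω : Continuous fun p : V × W => ω p.1 p.2)
    (h₁ : G → V ≃ₗᵢ[ℝ] V) (h₂ : G → W ≃ₗᵢ[ℝ] W)
    (h₁anti : ∀ (g₁ g₂ : G) (x : V), h₁ (g₁ * g₂) x = h₁ g₂ (h₁ g₁ x))
    (h₁one : ∀ x : V, h₁ 1 x = x)
    (h₂hom : ∀ (g₁ g₂ : G) (y : W), h₂ (g₁ * g₂) y = h₂ g₁ (h₂ g₂ y))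
    (h₂one : ∀ y : W, h₂ 1 y = y)
    (hinv : ∀ (g : G) (x : V) (y : W), ω (h₁ g x) y = ω x (h₂ g y))
    (v : V) (ψ : W)
    (hv : Continuous fun g : G => h₁ g v)
    (hψ : Continuous fun g : G => h₂ g ψ) :
    (∃ C : ℝ, ∀ g : G, |ω (h₁ g v) ψ| ≤ C) ∧
    (∀ ε > (0 : ℝ), ∃ U ∈ nhds (1 : G), ∀ u ∈ U, ∀ g : G,
        |ω (h₁ (u * g) v) ψ - ω (h₁ g v) ψ| < ε) ∧
    (∀ ε > (0 : ℝ), ∃ U ∈ nhds (1 : G), ∀ u ∈ U, ∀ g : G,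
        |ω (h₁ (g * u) v) ψ - ω (h₁ g v) ψ| < ε) :=
  matrix_coefficient_uniformly_continuous_general ω hω h₁ h₂ h₁anti h₁one h₂one hinv v ψ hv hψ
end

section
/- Let G act continuously on a normed space V from the right by linear isometries, and let x₀ ∈ V*. If each M_n ⊆ V (n ∈ ℕ) is SUC-small at x₀ and (δ_n) is a sequence of positive reals with δ_n → 0, then ⋂_{n∈ℕ} (M_n + δ_n B_V) is SUC-small at x₀. -/
open Pointwise Filter Topology Metric

/-- `x₀ (h u v)` is `⟨v, u x₀⟩` for the adjoint action of `G` on `V*`. -/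
def SUCSmall {G V : Type*} [Group G] [TopologicalSpace G] [NormedAddCommGroup V]
    [NormedSpace ℝ V] (h : G → V ≃ₗᵢ[ℝ] V) (x₀ : V →L[ℝ] ℝ) (M : Set V) : Prop :=
  ∀ ε > (0 : ℝ), ∃ U ∈ 𝓝 (1 : G), ∀ u ∈ U, ∀ v ∈ M, |x₀ (h u v) - x₀ v| ≤ ε

section

variable {G V : Type*} [Group G] [TopologicalSpace G] [NormedAddCommGroup V] [NormedSpace ℝ V]

lemma abs_apply_isometry_sub_le (x₀ : V →L[ℝ] ℝ) (T : V ≃ₗᵢ[ℝ] V) (b : V) :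
    |x₀ (T b) - x₀ b| ≤ 2 * ‖x₀‖ * ‖b‖ :=
  calc |x₀ (T b) - x₀ b| = ‖x₀ (T b - b)‖ := by rw [map_sub, Real.norm_eq_abs]
    _ ≤ ‖x₀‖ * ‖T b - b‖ := x₀.le_opNorm _
    _ ≤ ‖x₀‖ * (‖T b‖ + ‖b‖) := by gcongr; exact norm_sub_le _ _
    _ = 2 * ‖x₀‖ * ‖b‖ := by rw [T.norm_map]; ring

lemma SUCSmall.exists_nhds_add_closedBall {h : G → V ≃ₗᵢ[ℝ] V} {x₀ : V →L[ℝ] ℝ} {M : Set V}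
    (hM : SUCSmall h x₀ M) {ε : ℝ} (hε : 0 < ε) (r : ℝ) :
    ∃ U ∈ 𝓝 (1 : G), ∀ u ∈ U, ∀ w ∈ M + closedBall (0 : V) r,
      |x₀ (h u w) - x₀ w| ≤ ε + 2 * ‖x₀‖ * r := by
  obtain ⟨U, hU, hUM⟩ := hM ε hε
  refine ⟨U, hU, ?_⟩
  rintro u hu _ ⟨v, hv, b, hb, rfl⟩
  rw [mem_closedBall_zero_iff] at hb
  have hsplit : x₀ (h u (v + b)) - x₀ (v + b) = (x₀ (h u v) - x₀ v) + (x₀ (h u b) - x₀ b) := by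
    simp only [map_add]; ring
  calc |x₀ (h u (v + b)) - x₀ (v + b)|
      ≤ |x₀ (h u v) - x₀ v| + |x₀ (h u b) - x₀ b| := hsplit ▸ abs_add_le _ _
    _ ≤ ε + 2 * ‖x₀‖ * r := by
      gcongr
      · exact hUM u hu v hv
      · exact (abs_apply_isometry_sub_le x₀ (h u) b).trans (by gcongr)

end

theorem SUCsmall_iInter_add_ball_general {G V : Type*}
    [Group G] [TopologicalSpace G]
    [NormedAddCommGroup V] [NormedSpace ℝ V]
    (h : G → V ≃ₗᵢ[ℝ] V)
    (x₀ : V →L[ℝ] ℝ)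
    (M : ℕ → Set V)
    (hM : ∀ n, ∀ ε > (0 : ℝ), ∃ U ∈ nhds (1 : G), ∀ u ∈ U, ∀ v ∈ M n,
      |x₀ (h u v) - x₀ v| ≤ ε)
    (δ : ℕ → ℝ)
    (hδ : Filter.Tendsto δ Filter.atTop (nhds 0)) :
    ∀ ε > (0 : ℝ), ∃ U ∈ nhds (1 : G), ∀ u ∈ U,
      ∀ w ∈ ⋂ n, (M n + Metric.closedBall (0 : V) (δ n)),
        |x₀ (h u w) - x₀ w| ≤ ε := by
  intro ε hε
  have hδ' : Tendsto (fun n => 2 * ‖x₀‖ * δ n) atTop (𝓝 0) := by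
    simpa using hδ.const_mul (2 * ‖x₀‖)
  obtain ⟨n, hn⟩ := (hδ'.eventually_lt_const (half_pos hε)).exists
  obtain ⟨U, hU, hUn⟩ := SUCSmall.exists_nhds_add_closedBall (hM n) (half_pos hε) (δ n)
  refine ⟨U, hU, fun u hu w hw => ?_⟩
  linarith [hUn u hu w (Set.mem_iInter.1 hw n)]

/-- If each `Mₙ ⊆ V` is SUC-small at `x₀ ∈ V*` (for a continuous right action of `G` on
`V` by linear isometries) and `δₙ → 0` with `δₙ > 0`, then `⋂ₙ (Mₙ + δₙ·B_V)` is
SUC-small at `x₀`. -/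
theorem SUCsmall_iInter_add_ball {G V : Type*}
    [Group G] [TopologicalSpace G] [IsTopologicalGroup G]
    [NormedAddCommGroup V] [NormedSpace ℝ V]
    (h : G → V ≃ₗᵢ[ℝ] V)
    (hanti : ∀ (g₁ g₂ : G) (x : V), h (g₁ * g₂) x = h g₂ (h g₁ x))
    (hone : ∀ x : V, h 1 x = x)
    (hcont : Continuous fun p : G × V => h p.1 p.2)
    (x₀ : V →L[ℝ] ℝ)
    (M : ℕ → Set V)
    (hM : ∀ n, ∀ ε > (0 : ℝ), ∃ U ∈ nhds (1 : G), ∀ u ∈ U, ∀ v ∈ M n,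
      |x₀ (h u v) - x₀ v| ≤ ε)
    (δ : ℕ → ℝ) (hδpos : ∀ n, 0 < δ n)
    (hδ : Filter.Tendsto δ Filter.atTop (nhds 0)) :
    ∀ ε > (0 : ℝ), ∃ U ∈ nhds (1 : G), ∀ u ∈ U,
      ∀ w ∈ ⋂ n, (M n + Metric.closedBall (0 : V) (δ n)),
        |x₀ (h u w) - x₀ w| ≤ ε :=
  SUCsmall_iInter_add_ball_general h x₀ M hM δ hδ
end

section
/- Let G act continuously on normed spaces V and E from the right by linear isometries, and let γ : V → E be a continuous linear G-equivariant map. If M ⊆ E is SUC-small at ψ ∈ E*, then γ⁻¹(M) ⊆ V is SUC-small at γ*(ψ) ∈ V*, where γ* is the adjoint operator. -/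
theorem SUCsmall_preimage_general {G V E : Type*}
    [Group G] [TopologicalSpace G]
    [NormedAddCommGroup V] [NormedSpace ℝ V]
    [NormedAddCommGroup E] [NormedSpace ℝ E]
    (hV : G → V ≃ₗᵢ[ℝ] V) (hE : G → E ≃ₗᵢ[ℝ] E)
    (γ : V →L[ℝ] E)
    (hequiv : ∀ (g : G) (v : V), γ (hV g v) = hE g (γ v))
    (M : Set E) (ψ : E →L[ℝ] ℝ)
    (hM : ∀ ε > (0 : ℝ), ∃ U ∈ nhds (1 : G), ∀ u ∈ U, ∀ m ∈ M,
      |ψ (hE u m) - ψ m| ≤ ε) :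
    ∀ ε > (0 : ℝ), ∃ U ∈ nhds (1 : G), ∀ u ∈ U, ∀ v ∈ γ ⁻¹' M,
      |(ψ.comp γ) (hV u v) - (ψ.comp γ) v| ≤ ε := by
  intro ε hε
  obtain ⟨U, hU, hUM⟩ := hM ε hε
  refine ⟨U, hU, fun u hu v hv => ?_⟩
  simpa only [ContinuousLinearMap.comp_apply, hequiv] using hUM u hu (γ v) hv

/-- If `γ : V → E` is a continuous linear `G`-equivariant map between normed right
`G`-spaces (actions by linear isometries) and `M ⊆ E` is SUC-small at `ψ ∈ E*`, then
`γ⁻¹(M) ⊆ V` is SUC-small at the adjoint vector `γ*(ψ) = ψ ∘ γ ∈ V*`. -/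
theorem SUCsmall_preimage {G V E : Type*}
    [Group G] [TopologicalSpace G] [IsTopologicalGroup G]
    [NormedAddCommGroup V] [NormedSpace ℝ V]
    [NormedAddCommGroup E] [NormedSpace ℝ E]
    (hV : G → V ≃ₗᵢ[ℝ] V) (hE : G → E ≃ₗᵢ[ℝ] E)
    (hVanti : ∀ (g₁ g₂ : G) (x : V), hV (g₁ * g₂) x = hV g₂ (hV g₁ x))
    (hVone : ∀ x : V, hV 1 x = x)
    (hVcont : Continuous fun p : G × V => hV p.1 p.2)
    (hEanti : ∀ (g₁ g₂ : G) (x : E), hE (g₁ * g₂) x = hE g₂ (hE g₁ x))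
    (hEone : ∀ x : E, hE 1 x = x)
    (hEcont : Continuous fun p : G × E => hE p.1 p.2)
    (γ : V →L[ℝ] E)
    (hequiv : ∀ (g : G) (v : V), γ (hV g v) = hE g (γ v))
    (M : Set E) (ψ : E →L[ℝ] ℝ)
    (hM : ∀ ε > (0 : ℝ), ∃ U ∈ nhds (1 : G), ∀ u ∈ U, ∀ m ∈ M,
      |ψ (hE u m) - ψ m| ≤ ε) :
    ∀ ε > (0 : ℝ), ∃ U ∈ nhds (1 : G), ∀ u ∈ U, ∀ v ∈ γ ⁻¹' M,
      |(ψ.comp γ) (hV u v) - (ψ.comp γ) v| ≤ ε :=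
  SUCsmall_preimage_general hV hE γ hequiv M ψ hM
end
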